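/- arXiv:2201.07905 — 5 statements merged into one kernel-verified Lean document; each statement's English description precedes it below -/
import Mathlib

section
/- (Lemma 2, second part) If a cluster c satisfies s(c) < W/2, i.e., Σ_{k=1}^p w_k·𝟙(c ∈ C_k) < 0.5·Σ_{k=1}^p w_k, then c belongs to no optimal solution C*. -/
/-!
Deleting a cluster `c` from a laminar set keeps it laminar, and changes `|C* Δ C_k|` by `+1` if
`c ∈ C_k` and by `-1` otherwise. So the objective changes by `2 s(c) - W`, which is negative when
`s(c) < W/2`: an optimal solution cannot contain such a `c`.
-/

/-- Two clusters are *compatible* if they are disjoint or one contains the other. -/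
def compatible {L : Type*} [DecidableEq L] (c₁ c₂ : Finset L) : Prop :=
  c₁ ∩ c₂ = ∅ ∨ c₁ ⊆ c₂ ∨ c₂ ⊆ c₁

/-- A cluster set is *laminar* if any two of its elements are compatible. -/
def laminar {L : Type*} [DecidableEq L] (S : Finset (Finset L)) : Prop :=
  ∀ c₁ ∈ S, ∀ c₂ ∈ S, compatible c₁ c₂

/-- The weighted support `s(c) = Σ_k w_k · 𝟙(c ∈ C_k)` of a cluster `c`. -/
def supp {L : Type*} [DecidableEq L] {p : ℕ} (w : Fin p → ℝ)
    (C : Fin p → Finset (Finset L)) (c : Finset L) : ℝ :=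
  ∑ k, if c ∈ C k then w k else 0

/-- The weighted Robinson–Foulds objective `f(X) = Σ_k w_k · |X Δ C_k|`. -/
def rfObj {L : Type*} [DecidableEq L] {p : ℕ} (w : Fin p → ℝ)
    (C : Fin p → Finset (Finset L)) (X : Finset (Finset L)) : ℝ :=
  ∑ k, w k * ((symmDiff X (C k)).card : ℝ)

open Finset

lemma Finset.symmDiff_singleton_of_mem {α : Type*} [DecidableEq α] {s : Finset α} {a : α}
    (ha : a ∈ s) : symmDiff s {a} = s.erase a := by
  ext x
  by_cases hx : x = a <;> simp [mem_symmDiff, hx, ha]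

lemma Finset.symmDiff_singleton_of_notMem {α : Type*} [DecidableEq α] {s : Finset α} {a : α}
    (ha : a ∉ s) : symmDiff s {a} = insert a s := by
  ext x
  by_cases hx : x = a <;> simp [mem_symmDiff, hx, ha]

lemma Finset.card_symmDiff_singleton_cast {α : Type*} [DecidableEq α] (s : Finset α) (a : α) :
    ((symmDiff s {a}).card : ℝ) = s.card + if a ∈ s then -1 else 1 := by
  by_cases ha : a ∈ s
  · have hpos : 1 ≤ s.card := card_pos.mpr ⟨a, ha⟩
    rw [symmDiff_singleton_of_mem ha, card_erase_of_mem ha, Nat.cast_sub hpos, if_pos ha]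
    ring
  · rw [symmDiff_singleton_of_notMem ha, card_insert_of_notMem ha, if_neg ha]
    push_cast
    ring

lemma Finset.card_symmDiff_erase_cast {α : Type*} [DecidableEq α] {X : Finset α} {c : α}
    (hc : c ∈ X) (Y : Finset α) :
    ((symmDiff (X.erase c) Y).card : ℝ) = (symmDiff X Y).card + if c ∈ Y then 1 else -1 := by
  have htoggle : symmDiff (X.erase c) Y = symmDiff (symmDiff X Y) {c} := by
    rw [← symmDiff_singleton_of_mem hc, symmDiff_right_comm]
  have hmem : c ∈ symmDiff X Y ↔ c ∉ Y := by simp [mem_symmDiff, hc]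
  rw [htoggle, card_symmDiff_singleton_cast]
  by_cases hcY : c ∈ Y <;> simp [hmem, hcY]

lemma laminar.mono {L : Type*} [DecidableEq L] {S T : Finset (Finset L)} (hS : laminar S)
    (hTS : T ⊆ S) : laminar T :=
  fun c₁ h₁ c₂ h₂ => hS c₁ (hTS h₁) c₂ (hTS h₂)

lemma rfObj_erase {L : Type*} [DecidableEq L] {p : ℕ} (w : Fin p → ℝ)
    (C : Fin p → Finset (Finset L)) {X : Finset (Finset L)} {c : Finset L} (hc : c ∈ X) :
    rfObj w C (X.erase c) = rfObj w C X + (2 * supp w C c - ∑ k, w k) := by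
  simp only [rfObj, supp, card_symmDiff_erase_cast hc, mul_sum, ← sum_sub_distrib,
    ← sum_add_distrib]
  refine sum_congr rfl fun k _ => ?_
  split_ifs <;> ring

theorem minority_not_mem_optimal_general {L : Type*} [DecidableEq L] {p : ℕ}
    (w : Fin p → ℝ) (C : Fin p → Finset (Finset L))
    (c : Finset L)
    (hmin : supp w C c < (∑ k, w k) / 2)
    (Cstar : Finset (Finset L)) (hne : ∀ c' ∈ Cstar, c'.Nonempty)
    (hlam : laminar Cstar)
    (hopt : ∀ X : Finset (Finset L), (∀ c' ∈ X, c'.Nonempty) → laminar X →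
      rfObj w C Cstar ≤ rfObj w C X) :
    c ∉ Cstar := by
  intro hcC
  have hle := hopt (Cstar.erase c) (fun c' hc' => hne c' (mem_of_mem_erase hc'))
    (hlam.mono (erase_subset c Cstar))
  rw [rfObj_erase w C hcC] at hle
  linarith

/-- Lemma 2, second part: a cluster with minority weighted support,
`s(c) < W/2`, belongs to no optimal solution `C*`. -/
theorem minority_not_mem_optimal {L : Type*} [DecidableEq L] {p : ℕ}
    (w : Fin p → ℝ) (C : Fin p → Finset (Finset L))
    (hw : ∀ k, 0 < w k) (hCne : ∀ k, ∀ c ∈ C k, c.Nonempty)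
    (hClam : ∀ k, laminar (C k))
    (c : Finset L) (hc : c.Nonempty)
    (hmin : supp w C c < (∑ k, w k) / 2)
    (Cstar : Finset (Finset L)) (hne : ∀ c' ∈ Cstar, c'.Nonempty)
    (hlam : laminar Cstar)
    (hopt : ∀ X : Finset (Finset L), (∀ c' ∈ X, c'.Nonempty) → laminar X →
      rfObj w C Cstar ≤ rfObj w C X) :
    c ∉ Cstar :=
  minority_not_mem_optimal_general w C c hmin Cstar hne hlam hopt
end

section
/- If a cluster c has exactly half weighted support, s(c) = W/2, and a cluster c' has majority weighted support, s(c') > W/2, then c and c' are compatible. -/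
theorem supp_add_supp_le_of_not_compatible {L : Type*} [DecidableEq L] {p : ℕ}
    {w : Fin p → ℝ} {C : Fin p → Finset (Finset L)} (hw : ∀ k, 0 ≤ w k)
    (hClam : ∀ k, laminar (C k)) {c c' : Finset L} (hnc : ¬ compatible c c') :
    supp w C c + supp w C c' ≤ ∑ k, w k := by
  rw [supp, supp, ← Finset.sum_add_distrib]
  refine Finset.sum_le_sum fun k _ => ?_
  have hnot_both : ¬ (c ∈ C k ∧ c' ∈ C k) := fun ⟨h, h'⟩ => hnc (hClam k c h c' h')
  have := hw k
  split_ifs <;> simp_all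

theorem half_majority_compatible_general {L : Type*} [DecidableEq L] {p : ℕ}
    (w : Fin p → ℝ) (C : Fin p → Finset (Finset L))
    (hw : ∀ k, 0 < w k)
    (hClam : ∀ k, laminar (C k))
    (c c' : Finset L)
    (hhalf : supp w C c = (∑ k, w k) / 2)
    (hmaj : (∑ k, w k) / 2 < supp w C c') :
    compatible c c' := by
  by_contra hnc
  have := supp_add_supp_le_of_not_compatible (fun k => (hw k).le) hClam hnc
  linarith

/-- a cluster with exactly half weighted support is compatible with
every cluster with majority weighted support. -/
theorem half_majority_compatible {L : Type*} [DecidableEq L] {p : ℕ}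
    (w : Fin p → ℝ) (C : Fin p → Finset (Finset L))
    (hw : ∀ k, 0 < w k) (hCne : ∀ k, ∀ c ∈ C k, c.Nonempty)
    (hClam : ∀ k, laminar (C k))
    (c c' : Finset L) (hc : c.Nonempty) (hc' : c'.Nonempty)
    (hhalf : supp w C c = (∑ k, w k) / 2)
    (hmaj : (∑ k, w k) / 2 < supp w C c') :
    compatible c c' :=
  half_majority_compatible_general w C hw hClam c c' hhalf hmaj
end

section
/- Adding a cluster with exactly half weighted support does not change the weighted Robinson–Foulds objective: if c ∉ C and s(c) = W/2, then f(C ∪ {c}) = f(C). -/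
namespace Finset

variable {α : Type*} [DecidableEq α]

theorem card_singleton_symmDiff (a : α) (u : Finset α) :
    ((symmDiff {a} u).card : ℤ) = u.card + if a ∈ u then -1 else 1 := by
  by_cases ha : a ∈ u
  · have hset : symmDiff {a} u = u.erase a := by
      ext x
      by_cases hx : x = a <;> simp [mem_symmDiff, hx, ha]
    rw [hset, if_pos ha, card_erase_of_mem ha, Nat.cast_sub (card_pos.mpr ⟨a, ha⟩)]
    ring
  · have hset : symmDiff {a} u = insert a u := by
      ext x
      by_cases hx : x = a <;> simp [mem_symmDiff, hx, ha]
    rw [hset, if_neg ha, card_insert_of_notMem ha, Nat.cast_succ]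

theorem card_insert_symmDiff_of_notMem {a : α} {s : Finset α} (ha : a ∉ s) (t : Finset α) :
    ((symmDiff (insert a s) t).card : ℤ) = (symmDiff s t).card + if a ∈ t then -1 else 1 := by
  have hins : insert a s = symmDiff {a} s :=
    (symmDiff_eq_union (disjoint_singleton_left.mpr ha)).symm ▸ insert_eq a s
  rw [hins, symmDiff_assoc, card_singleton_symmDiff]
  simp [mem_symmDiff, ha]

end Finset

theorem rfObj_insert_of_notMem {L : Type*} [DecidableEq L] {p : ℕ} (w : Fin p → ℝ)
    (C : Fin p → Finset (Finset L)) {X : Finset (Finset L)} {c : Finset L} (hcX : c ∉ X) :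
    rfObj w C (insert c X) = rfObj w C X + ∑ k, w k - 2 * supp w C c := by
  have hcard (k : Fin p) : ((symmDiff (insert c X) (C k)).card : ℝ) =
      (symmDiff X (C k)).card + if c ∈ C k then -1 else 1 := by
    exact_mod_cast Finset.card_insert_symmDiff_of_notMem hcX (C k)
  simp only [rfObj, supp, hcard, Finset.mul_sum, ← Finset.sum_add_distrib, ← Finset.sum_sub_distrib]
  refine Finset.sum_congr rfl fun k _ => ?_
  split_ifs <;> ring

theorem rfObj_insert_half_general {L : Type*} [DecidableEq L] {p : ℕ}
    (w : Fin p → ℝ) (C : Fin p → Finset (Finset L))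
    (X : Finset (Finset L))
    (c : Finset L) (hcX : c ∉ X)
    (hhalf : supp w C c = (∑ k, w k) / 2) :
    rfObj w C (insert c X) = rfObj w C X := by
  rw [rfObj_insert_of_notMem w C hcX, hhalf]
  ring

/-- adding a cluster with exactly half weighted support does not
change the weighted RF objective: if `c ∉ C` and `s(c) = W/2`, then
`f(C ∪ {c}) = f(C)`. -/
theorem rfObj_insert_half {L : Type*} [DecidableEq L] {p : ℕ}
    (w : Fin p → ℝ) (C : Fin p → Finset (Finset L))
    (hw : ∀ k, 0 < w k) (hCne : ∀ k, ∀ c ∈ C k, c.Nonempty)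
    (X : Finset (Finset L)) (hXne : ∀ c ∈ X, c.Nonempty)
    (c : Finset L) (hc : c.Nonempty) (hcX : c ∉ X)
    (hhalf : supp w C c = (∑ k, w k) / 2) :
    rfObj w C (insert c X) = rfObj w C X :=
  rfObj_insert_half_general w C X c hcX hhalf
end

section
/- (Lemma 4) Let C' = {c ∈ C₁ ∪ … ∪ C_p : s(c) = W/2} be the clusters with exactly half weighted support, and let G be the simple graph on vertex set C' with an edge between two clusters exactly when they are incompatible. Then G is bipartite; equivalently, G contains no odd cycle and admits a proper 2-coloring. -/
/-- The incompatibility graph on a set `V` of clusters: two clusters are adjacent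
exactly when they are incompatible. -/
def incompGraph {L : Type*} [DecidableEq L] (V : Set (Finset L)) : SimpleGraph V where
  Adj a b := ¬ compatible (a : Finset L) (b : Finset L)
  symm := by
    constructor
    intro a b h hc
    refine h ?_
    rcases hc with h' | h' | h'
    · exact Or.inl (by rwa [Finset.inter_comm])
    · exact Or.inr (Or.inr h')
    · exact Or.inr (Or.inl h')
  loopless := by
    constructor
    intro a h
    exact h (Or.inr (Or.inl (subset_refl _)))

open Finset SimpleGraph

theorem Finset.union_eq_of_disjoint_of_sum_add_sum_eq {ι M : Type*} [DecidableEq ι]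
    [AddCommMonoid M] [PartialOrder M] [IsOrderedCancelAddMonoid M] {s A B : Finset ι} {w : ι → M}
    (hw : ∀ i ∈ s, 0 < w i) (hA : A ⊆ s) (hB : B ⊆ s) (hAB : Disjoint A B)
    (h : ∑ i ∈ A, w i + ∑ i ∈ B, w i = ∑ i ∈ s, w i) : A ∪ B = s := by
  by_contra hne
  have hss : A ∪ B ⊂ s := ssubset_of_subset_of_ne (union_subset hA hB) hne
  obtain ⟨i, his, hi⟩ := exists_of_ssubset hss
  have hlt := sum_lt_sum_of_subset hss.subset his hi (hw i his) fun j hj _ => (hw j hj).le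
  rw [sum_union hAB] at hlt
  exact hlt.ne h

section Support

variable {L : Type*} [DecidableEq L] {p : ℕ} {w : Fin p → ℝ} {C : Fin p → Finset (Finset L)}

theorem supp_eq_sum_filter (c : Finset L) : supp w C c = ∑ k with c ∈ C k, w k :=
  (sum_filter _ _).symm

theorem mem_iff_notMem_of_supp_eq_half (hw : ∀ k, 0 < w k) (hC : ∀ k, laminar (C k))
    {a b : Finset L} (ha : supp w C a = (∑ k, w k) / 2) (hb : supp w C b = (∑ k, w k) / 2)
    (hab : ¬compatible a b) (k : Fin p) : a ∈ C k ↔ b ∉ C k := by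
  have hdisj : Disjoint (univ.filter (a ∈ C ·)) (univ.filter (b ∈ C ·)) :=
    disjoint_filter.2 fun k _ hak hbk => hab (hC k a hak b hbk)
  have hcover := union_eq_of_disjoint_of_sum_add_sum_eq (fun k _ => hw k)
    (filter_subset _ _) (filter_subset _ _) hdisj
    (by rw [← supp_eq_sum_filter a, ← supp_eq_sum_filter b, ha, hb]; ring)
  have hk : k ∈ univ.filter (a ∈ C ·) ∪ univ.filter (b ∈ C ·) := hcover.ge (mem_univ k)
  simp only [mem_union, mem_filter_univ] at hk
  exact ⟨fun hak hbk => hab (hC k a hak b hbk), hk.resolve_right⟩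

end Support

theorem incompGraph_half_bipartite_general {L : Type*} [DecidableEq L] {p : ℕ}
    (w : Fin p → ℝ) (C : Fin p → Finset (Finset L))
    (hw : ∀ k, 0 < w k)
    (hClam : ∀ k, laminar (C k)) :
    (incompGraph {c : Finset L |
      c ∈ Finset.univ.biUnion C ∧ supp w C c = (∑ k, w k) / 2}).Colorable 2 := by
  rcases isEmpty_or_nonempty (Fin p) with _ | ⟨⟨k₀⟩⟩
  · have : IsEmpty {c : Finset L | c ∈ univ.biUnion C ∧ supp w C c = (∑ k, w k) / 2} :=
      ⟨fun c => by simpa using c.2.1⟩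
    exact .of_isEmpty 2
  · refine (Coloring.mk (fun c => decide (c.1 ∈ C k₀)) fun {a b} hab => ?_).colorable
    simp [mem_iff_notMem_of_supp_eq_half hw hClam a.2.2 b.2.2 hab k₀]

/-- Lemma 4: the incompatibility graph on the clusters with exactly
half weighted support, `C' = {c ∈ C₁ ∪ … ∪ C_p : s(c) = W/2}`, is bipartite,
i.e., it admits a proper 2-coloring. -/
theorem incompGraph_half_bipartite {L : Type*} [DecidableEq L] {p : ℕ}
    (w : Fin p → ℝ) (C : Fin p → Finset (Finset L))
    (hw : ∀ k, 0 < w k) (hCne : ∀ k, ∀ c ∈ C k, c.Nonempty)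
    (hClam : ∀ k, laminar (C k)) :
    (incompGraph {c : Finset L |
      c ∈ Finset.univ.biUnion C ∧ supp w C c = (∑ k, w k) / 2}).Colorable 2 :=
  incompGraph_half_bipartite_general w C hw hClam
end

section
/- (Theorem 1) Let M⁺ = {c ∈ C₁ ∪ … ∪ C_p : s(c) > W/2} and let M be any pairwise-compatible subset of C' = {c ∈ C₁ ∪ … ∪ C_p : s(c) = W/2}. Then the cluster set M⁺ ∪ M is laminar and satisfies f(M⁺ ∪ M) ≤ f(C) for every laminar cluster set C; that is, M⁺ ∪ M minimizes the weighted Robinson–Foulds objective subject to the compatibility constraint that all pairs of clusters in the output are compatible. -/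
attribute [local instance] Classical.propDecidable

/-!
The objective is additive over clusters: `f(X) = Σ_{c ∈ X} (W - 2 s(c)) + const`, so it is
minimized by taking exactly the clusters of negative cost `W - 2 s(c)` (those of support `> W/2`),
together with any clusters of zero cost. Such a choice is laminar: two clusters whose supports add
up to more than `W` must occur together in some input `C_k`, which is laminar, while clusters of
support exactly `W/2` are compatible by assumption.
-/

open Finset

theorem Finset.card_symmDiff_add_two_mul_card_inter {α : Type*} [DecidableEq α]
    (s t : Finset α) : #(symmDiff s t) + 2 * #(s ∩ t) = #s + #t := by
  rw [symmDiff_eq_sup_sdiff_inf, sup_eq_union, inf_eq_inter,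
    card_sdiff_of_subset (inter_subset_union), ← card_union_add_card_inter s t]
  have := card_le_card (inter_subset_union (s := s) (t := t))
  omega

theorem Finset.sum_le_sum_of_nonpos_of_neg_mem {ι M : Type*} [DecidableEq ι] [AddCommMonoid M]
    [LinearOrder M] [IsOrderedCancelAddMonoid M] {S X : Finset ι} {g : ι → M}
    (hS : ∀ i ∈ S, g i ≤ 0) (hX : ∀ i ∈ X, g i < 0 → i ∈ S) :
    ∑ i ∈ S, g i ≤ ∑ i ∈ X, g i := by
  rw [← sum_sdiff_le_sum_sdiff]
  calc ∑ i ∈ S \ X, g i ≤ 0 := sum_nonpos fun i hi => hS i (mem_sdiff.mp hi).1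
    _ ≤ ∑ i ∈ X \ S, g i := sum_nonneg fun i hi =>
        not_lt.mp fun hneg => (mem_sdiff.mp hi).2 (hX i (mem_sdiff.mp hi).1 hneg)

section Laminar

variable {L : Type*} [DecidableEq L]

theorem compatible_comm {c₁ c₂ : Finset L} : compatible c₁ c₂ ↔ compatible c₂ c₁ := by
  simp only [compatible, inter_comm c₁, or_comm (a := c₁ ⊆ c₂)]

theorem laminar_union {S T : Finset (Finset L)} (hS : laminar S) (hT : laminar T)
    (hST : ∀ a ∈ S, ∀ b ∈ T, compatible a b) : laminar (S ∪ T) := by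
  intro c₁ hc₁ c₂ hc₂
  rcases mem_union.mp hc₁ with h₁ | h₁ <;> rcases mem_union.mp hc₂ with h₂ | h₂
  · exact hS c₁ h₁ c₂ h₂
  · exact hST c₁ h₁ c₂ h₂
  · exact compatible_comm.mp (hST c₂ h₂ c₁ h₁)
  · exact hT c₁ h₁ c₂ h₂

end Laminar

section Support

variable {L : Type*} [DecidableEq L] {p : ℕ} (w : Fin p → ℝ) (C : Fin p → Finset (Finset L))

theorem sum_supp_eq_sum_mul_card_inter (X : Finset (Finset L)) :
    ∑ c ∈ X, supp w C c = ∑ k, w k * #(X ∩ C k) := by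
  simp only [supp]
  rw [sum_comm]
  refine sum_congr rfl fun k _ => ?_
  rw [sum_ite_mem, sum_const, nsmul_eq_mul, mul_comm]

theorem rfObj_eq_sum_add (X : Finset (Finset L)) :
    rfObj w C X = ∑ c ∈ X, ((∑ k, w k) - 2 * supp w C c) + ∑ k, w k * #(C k) := by
  have hcard : ∀ k, (#(symmDiff X (C k)) : ℝ) = #X + #(C k) - 2 * #(X ∩ C k) := fun k => by
    have := card_symmDiff_add_two_mul_card_inter X (C k)
    rw [eq_sub_iff_add_eq]
    exact_mod_cast this
  rw [sum_sub_distrib, sum_const, nsmul_eq_mul, ← mul_sum, sum_supp_eq_sum_mul_card_inter]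
  simp only [rfObj, hcard, mul_sub, mul_add, sum_sub_distrib, sum_add_distrib,
    mul_left_comm _ (2 : ℝ), ← mul_sum, ← sum_mul]
  ring

theorem mem_biUnion_of_supp_pos {c : Finset L} (h : 0 < supp w C c) :
    c ∈ univ.biUnion C := by
  by_contra hc
  simp only [mem_biUnion, mem_univ, true_and, not_exists] at hc
  simp [supp, hc] at h

theorem exists_mem_mem_of_total_lt_supp_add_supp (hw : ∀ k, 0 ≤ w k) {c₁ c₂ : Finset L}
    (h : ∑ k, w k < supp w C c₁ + supp w C c₂) : ∃ k, c₁ ∈ C k ∧ c₂ ∈ C k := by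
  by_contra! hcon
  refine h.not_ge ?_
  rw [supp, supp, ← sum_add_distrib]
  refine sum_le_sum fun k _ => ?_
  by_cases h₁ : c₁ ∈ C k
  · simp [h₁, hcon k h₁]
  · split_ifs <;> simp [hw k]

theorem compatible_of_total_lt_supp_add_supp (hw : ∀ k, 0 ≤ w k)
    (hClam : ∀ k, laminar (C k)) {c₁ c₂ : Finset L}
    (h : ∑ k, w k < supp w C c₁ + supp w C c₂) : compatible c₁ c₂ := by
  obtain ⟨k, h₁, h₂⟩ := exists_mem_mem_of_total_lt_supp_add_supp w C hw h
  exact hClam k c₁ h₁ c₂ h₂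

end Support

theorem majority_union_half_optimal_general {L : Type*} [DecidableEq L] {p : ℕ}
    (w : Fin p → ℝ) (C : Fin p → Finset (Finset L))
    (hw : ∀ k, 0 < w k)
    (hClam : ∀ k, laminar (C k))
    (M : Finset (Finset L))
    (hM : M ⊆ (Finset.univ.biUnion C).filter
      (fun c => supp w C c = (∑ k, w k) / 2))
    (hMcomp : ∀ c₁ ∈ M, ∀ c₂ ∈ M, compatible c₁ c₂) :
    laminar ((Finset.univ.biUnion C).filter
        (fun c => (∑ k, w k) / 2 < supp w C c) ∪ M) ∧
    ∀ X : Finset (Finset L), (∀ c ∈ X, c.Nonempty) → laminar X →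
      rfObj w C ((Finset.univ.biUnion C).filter
        (fun c => (∑ k, w k) / 2 < supp w C c) ∪ M) ≤ rfObj w C X := by
  set W := ∑ k, w k
  have hw₀ : ∀ k, 0 ≤ w k := fun k => (hw k).le
  have hW : 0 ≤ W := sum_nonneg fun k _ => hw₀ k
  have hMaj : ∀ c ∈ univ.biUnion C |>.filter (fun c => W / 2 < supp w C c),
      W / 2 < supp w C c := fun c hc => (mem_filter.mp hc).2
  have hHalf : ∀ c ∈ M, supp w C c = W / 2 := fun c hc => (mem_filter.mp (hM hc)).2
  refine ⟨laminar_union ?_ hMcomp ?_, fun X _ _ => ?_⟩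
  · exact fun c₁ h₁ c₂ h₂ => compatible_of_total_lt_supp_add_supp w C hw₀ hClam
      (by linarith [hMaj c₁ h₁, hMaj c₂ h₂])
  · exact fun c₁ h₁ c₂ h₂ => compatible_of_total_lt_supp_add_supp w C hw₀ hClam
      (by linarith [hMaj c₁ h₁, hHalf c₂ h₂])
  · rw [rfObj_eq_sum_add, rfObj_eq_sum_add]
    gcongr ?_ + _
    refine sum_le_sum_of_nonpos_of_neg_mem (fun c hc => ?_) fun c _ hneg => ?_
    · rcases mem_union.mp hc with h | h
      · linarith [hMaj c h]
      · linarith [hHalf c h]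
    · have hc : W / 2 < supp w C c := by linarith
      exact mem_union_left _
        (mem_filter.mpr ⟨mem_biUnion_of_supp_pos w C (by linarith), hc⟩)

/-- Theorem 1: for any pairwise-compatible subset `M` of the
half-support clusters `C' = {c ∈ C₁ ∪ … ∪ C_p : s(c) = W/2}`, the cluster set
`M⁺ ∪ M` (where `M⁺ = {c ∈ C₁ ∪ … ∪ C_p : s(c) > W/2}`) is laminar and minimizes
the weighted RF objective among all laminar cluster sets. -/
theorem majority_union_half_optimal {L : Type*} [DecidableEq L] {p : ℕ}
    (w : Fin p → ℝ) (C : Fin p → Finset (Finset L))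
    (hw : ∀ k, 0 < w k) (hCne : ∀ k, ∀ c ∈ C k, c.Nonempty)
    (hClam : ∀ k, laminar (C k))
    (M : Finset (Finset L))
    (hM : M ⊆ (Finset.univ.biUnion C).filter
      (fun c => supp w C c = (∑ k, w k) / 2))
    (hMcomp : ∀ c₁ ∈ M, ∀ c₂ ∈ M, compatible c₁ c₂) :
    laminar ((Finset.univ.biUnion C).filter
        (fun c => (∑ k, w k) / 2 < supp w C c) ∪ M) ∧
    ∀ X : Finset (Finset L), (∀ c ∈ X, c.Nonempty) → laminar X →
      rfObj w C ((Finset.univ.biUnion C).filter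
        (fun c => (∑ k, w k) / 2 < supp w C c) ∪ M) ≤ rfObj w C X :=
  majority_union_half_optimal_general w C hw hClam M hM hMcomp
end
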